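/- arXiv:1808.05090 — 2 statements merged into one kernel-verified Lean document; each statement's English description precedes it below -/
import Mathlib

section
/- Let c be a Coxeter element in the Weyl group of an affine root system of rank n. Then c, acting on V, has eigenvalue 1 with algebraic multiplicity 2 and geometric multiplicity 1, and the imaginary root δ is a 1-eigenvector of c. -/
open scoped BigOperators

noncomputable section

/-- A symmetrizable generalized Cartan matrix of affine type, together with the
coefficient vector `dz` of the primitive positive imaginary root `δ` spanning the
(one dimensional) kernel of the associated symmetric bilinear form. -/
structure AffineGCM (n : ℕ) where
  /-- the generalized Cartan matrix -/
  a : Matrix (Fin n) (Fin n) ℤ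
  /-- symmetrizing factors -/
  d : Fin n → ℝ
  diag : ∀ i, a i i = 2
  offdiag : ∀ i j, i ≠ j → a i j ≤ 0
  d_pos : ∀ i, 0 < d i
  symmetrizable : ∀ i j, d i * (a i j : ℝ) = d j * (a j i : ℝ)
  /-- `K` is positive semidefinite (on the real span of the simple roots) -/
  posSemidef : ∀ g : Fin n → ℝ, 0 ≤ ∑ i, ∑ j, g i * g j * (d i * (a i j : ℝ))
  /-- `K` is not positive definite -/
  not_posDef : ∃ g : Fin n → ℝ, g ≠ 0 ∧ ∑ i, ∑ j, g i * g j * (d i * (a i j : ℝ)) = 0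
  /-- the restriction of `K` to the span of every proper subset of the simple roots
  is positive definite -/
  proper_posDef : ∀ J : Finset (Fin n), J ≠ Finset.univ →
    ∀ g : Fin n → ℝ, (∀ i, i ∉ J → g i = 0) → g ≠ 0 →
      0 < ∑ i, ∑ j, g i * g j * (d i * (a i j : ℝ))
  /-- coordinates of the positive imaginary root `δ` in the basis of simple roots -/
  dz : Fin n → ℤ
  dz_pos : ∀ i, 0 < dz i
  /-- `δ` is the imaginary root closest to the origin: its coordinates are coprime -/
  dz_prim : Finset.univ.gcd dz = 1
  /-- `δ` spans the kernel of `K` -/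
  dz_ker : ∀ j, ∑ i, (dz i : ℝ) * (d i * (a i j : ℝ)) = 0

namespace AffineGCM

variable {n : ℕ}

/-- The ambient vector space `V`, with the simple roots as standard basis. -/
abbrev V (n : ℕ) := Fin n → ℂ

/-- the simple root `α i` (the `i`-th standard basis vector) -/
def α (i : Fin n) : V n := Pi.single i 1

/-- a vector is *positive* if it lies in the nonnegative real span of the simple roots -/
def IsPosRoot (v : V n) : Prop := ∀ i, 0 ≤ (v i).re ∧ (v i).im = 0

/-- a vector is *negative* if it lies in the nonpositive real span of the simple roots -/
def IsNegRoot (v : V n) : Prop := ∀ i, (v i).re ≤ 0 ∧ (v i).im = 0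

/-- the `g`-orbit of `x`: all `g ^ k • x` for integers `k` -/
def orbit (g : V n ≃ₗ[ℂ] V n) (x : V n) : Set (V n) := Set.range fun k : ℤ => (g ^ k) x

/-- `U g`: the span of all eigenvectors of `g`, i.e. the direct sum of its eigenspaces -/
def eigSpan (g : V n ≃ₗ[ℂ] V n) : Submodule ℂ (V n) :=
  ⨆ μ : ℂ, Module.End.eigenspace (g : Module.End ℂ (V n)) μ

/-- the span `V_fin` of the simple roots other than `α aff` -/
def Vfin (aff : Fin n) : Submodule ℂ (V n) :=
  Submodule.span ℂ (α '' {i : Fin n | i ≠ aff})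

variable (C : AffineGCM n)

/-- the simple coroot `α i ^ ∨ = (d i)⁻¹ • α i` -/
def coroot (i : Fin n) : V n := ((C.d i : ℂ))⁻¹ • α i

/-- The symmetric bilinear form `K`, determined by `K (coroot i) (α j) = a i j`,
that is, `K (α i) (α j) = d i * a i j`. -/
def K : V n →ₗ[ℂ] V n →ₗ[ℂ] ℂ :=
  LinearMap.mk₂ ℂ
    (fun x y => ∑ i, ∑ j, x i * y j * ((C.d i : ℂ) * (C.a i j : ℂ)))
    (fun x x' y => by
      simp only [Pi.add_apply, add_mul, Finset.sum_add_distrib])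
    (fun r x y => by
      simp only [Pi.smul_apply, smul_eq_mul, Finset.mul_sum]
      exact Finset.sum_congr rfl fun i _ => Finset.sum_congr rfl fun j _ => by ring)
    (fun x y y' => by
      simp only [Pi.add_apply, mul_add, add_mul, Finset.sum_add_distrib])
    (fun r x y => by
      simp only [Pi.smul_apply, smul_eq_mul, Finset.mul_sum]
      exact Finset.sum_congr rfl fun i _ => Finset.sum_congr rfl fun j _ => by ring)

/-- the linear map `v ↦ v - K x v • y`; reflections are special cases -/
def reflMap (x y : V n) : V n →ₗ[ℂ] V n where
  toFun v := v - C.K x v • y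
  map_add' u v := by simp only [map_add, add_smul]; abel
  map_smul' r u := by simp only [map_smul, smul_eq_mul, RingHom.id_apply, smul_sub, smul_smul]

lemma reflMap_apply (x y v : V n) : C.reflMap x y v = v - C.K x v • y := rfl

/-- the simple reflection `s i` as a linear endomorphism -/
def sLin (i : Fin n) : V n →ₗ[ℂ] V n := C.reflMap (C.coroot i) (α i)

lemma K_α_α (i j : Fin n) : C.K (α i) (α j) = (C.d i : ℂ) * (C.a i j : ℂ) := by
  simp [K, α, LinearMap.mk₂_apply, Pi.single_apply, ite_mul, zero_mul,
    Finset.sum_ite_eq', Finset.mem_univ]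

lemma K_coroot_α (i j : Fin n) : C.K (C.coroot i) (α j) = (C.a i j : ℂ) := by
  have hd : (C.d i : ℂ) ≠ 0 := by exact_mod_cast ne_of_gt (C.d_pos i)
  simp only [coroot, map_smul, LinearMap.smul_apply, smul_eq_mul, K_α_α]
  field_simp

lemma sLin_invol (i : Fin n) (v : V n) : C.sLin i (C.sLin i v) = v := by
  have h2 : C.K (C.coroot i) (α i) = 2 := by
    rw [K_coroot_α, C.diag]; norm_num
  simp only [sLin, reflMap_apply, map_sub, map_smul, h2, smul_eq_mul]
  module

/-- the simple reflection `s i` -/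
def s (i : Fin n) : V n ≃ₗ[ℂ] V n :=
  LinearEquiv.ofLinear (C.sLin i) (C.sLin i)
    (LinearMap.ext fun v => C.sLin_invol i v) (LinearMap.ext fun v => C.sLin_invol i v)

/-- the Weyl group `W`, as a subgroup of the group of linear automorphisms of `V` -/
def Wgroup : Subgroup (V n ≃ₗ[ℂ] V n) := Subgroup.closure (Set.range C.s)

/-- the Coxeter element `c = s 1 * s 2 * ⋯ * s n` -/
def cox : V n ≃ₗ[ℂ] V n := (List.ofFn C.s).prod

/-- the positive imaginary root `δ` -/
def δv : V n := fun i => ((C.dz i : ℤ) : ℂ)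

/-- the set of real roots: `W`-images of the simple roots -/
def realRoots : Set (V n) := {v | ∃ w ∈ C.Wgroup, ∃ i, w (α i) = v}

/-- the root system `Φ`: real roots together with the imaginary roots `k • δ`, `k ≠ 0` -/
def Φ : Set (V n) := C.realRoots ∪ {v | ∃ k : ℤ, k ≠ 0 ∧ v = (k : ℂ) • C.δv}

/-- `T→ = {α 1, s 1 α 2, …, s 1 ⋯ s (n-1) α n}` -/
def Tproj : Set (V n) :=
  Set.range fun k : Fin n => ((List.ofFn C.s).take k.val).prod (α k)

/-- `T← = {α n, s n α (n-1), …, s n ⋯ s 2 α 1}` -/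
def Tinj : Set (V n) :=
  Set.range fun k : Fin n => ((List.ofFn C.s).reverse.take (n - 1 - k.val)).prod (α k)

/-- `Φ_fin`, the finite root system `Φ ∩ V_fin` -/
def Φfin (aff : Fin n) : Set (V n) := C.Φ ∩ (Vfin aff : Set (V n))

/-- the root `θ = δ - [δ : α aff] • α aff` of `Φ_fin` -/
def θv (aff : Fin n) : V n := C.δv - ((C.dz aff : ℤ) : ℂ) • α aff

/-- the reflection `t β : v ↦ v - K (β^∨) v • β` in a (real) root `β`,
where `β^∨ = (2 / K β β) • β` -/
def tRefl (β : V n) : V n →ₗ[ℂ] V n := C.reflMap ((2 / C.K β β) • β) β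

/-- `c_◁ = s 1 * ⋯ * s (aff - 1)` -/
def cleft (aff : Fin n) : V n →ₗ[ℂ] V n := ((List.ofFn C.sLin).take aff.val).prod

/-- `c_▷ = s (aff + 1) * ⋯ * s n` -/
def cright (aff : Fin n) : V n →ₗ[ℂ] V n := ((List.ofFn C.sLin).drop (aff.val + 1)).prod

/-- `Υ^fin = Φ_fin ∩ U c` -/
def Υfin (aff : Fin n) : Set (V n) := C.Φfin aff ∩ (eigSpan C.cox : Set (V n))

/-- `B` is a simple system for a set `Θ` of roots: a linearly independent subset of `Θ`
such that every element of `Θ` is a nonnegative or a nonpositive combination of `B`. -/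
def IsSimpleSystem (Θ : Set (V n)) (B : Finset (V n)) : Prop :=
  ↑B ⊆ Θ ∧ LinearIndependent ℂ (fun b : B => (b : V n)) ∧
    ∀ v ∈ Θ, ∃ g : V n → ℝ, ((∀ b ∈ B, 0 ≤ g b) ∨ (∀ b ∈ B, g b ≤ 0)) ∧
      v = ∑ b ∈ B, (g b : ℂ) • b

/-- two roots of `Θ` are connected if they are joined by a chain of roots of `Θ`
that are pairwise non-orthogonal (with respect to `K`) -/
def Connected (Θ : Set (V n)) (x y : V n) : Prop :=
  Relation.ReflTransGen (fun u v => u ∈ Θ ∧ v ∈ Θ ∧ C.K u v ≠ 0) x y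

/-- the irreducible component of `x` in `Θ` -/
def component (Θ : Set (V n)) (x : V n) : Set (V n) := {y | y ∈ Θ ∧ C.Connected Θ x y}

/-- a set of roots is of finite type `A` if it consists exactly of the vectors
`±(β i + β (i+1) + ⋯ + β j)` for a linearly independent family `β 1, …, β k` -/
def IsTypeA (Θ : Set (V n)) : Prop :=
  ∃ (k : ℕ) (β : Fin k → V n), LinearIndependent ℂ β ∧ (∀ i, β i ∈ Θ) ∧
    Θ = {v | ∃ i j : Fin k, i ≤ j ∧
      (v = ∑ l ∈ Finset.Icc i j, β l ∨ v = -∑ l ∈ Finset.Icc i j, β l)}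

/-- `Ω = {β 1, t (β 1) (β 2), …, t (β 1) ⋯ t (β (m-1)) (β m)}` for an ordered
tuple `β` of roots -/
def Ωset {m : ℕ} (β : Fin m → V n) : Set (V n) :=
  Set.range fun j : Fin m => (((List.ofFn fun i => C.tRefl (β i)).take j.val).prod) (β j)

/-- `s i` is initial in a Coxeter element `c` if `c` is the product of a permutation
of all the simple reflections starting with `s i` -/
def IsInitial (i : Fin n) (c : V n ≃ₗ[ℂ] V n) : Prop :=
  ∃ l : List (Fin n), (i :: l).Perm (List.finRange n) ∧ ((i :: l).map C.s).prod = c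

/-- `s i` is final in a Coxeter element `c` if `c` is the product of a permutation
of all the simple reflections ending with `s i` -/
def IsFinal (i : Fin n) (c : V n ≃ₗ[ℂ] V n) : Prop :=
  ∃ l : List (Fin n), (l ++ [i]).Perm (List.finRange n) ∧ ((l ++ [i]).map C.s).prod = c

/-- the skew-symmetric bilinear form `ω_c`, determined by
`ω_c (coroot i) (α j) = a i j` if `i > j`, `= 0` if `i = j`, `= -a i j` if `i < j` -/
def ω : V n →ₗ[ℂ] V n →ₗ[ℂ] ℂ :=
  LinearMap.mk₂ ℂ
    (fun x y => ∑ i, ∑ j, x i * y j *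
      ((if j < i then 1 else if i = j then 0 else -1) * ((C.d i : ℂ) * (C.a i j : ℂ))))
    (fun x x' y => by
      simp only [Pi.add_apply, add_mul, Finset.sum_add_distrib])
    (fun r x y => by
      simp only [Pi.smul_apply, smul_eq_mul, Finset.mul_sum]
      exact Finset.sum_congr rfl fun i _ => Finset.sum_congr rfl fun j _ => by ring)
    (fun x y y' => by
      simp only [Pi.add_apply, mul_add, add_mul, Finset.sum_add_distrib])
    (fun r x y => by
      simp only [Pi.smul_apply, smul_eq_mul, Finset.mul_sum]
      exact Finset.sum_congr rfl fun i _ => Finset.sum_congr rfl fun j _ => by ring)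

end AffineGCM

/-!
Write the Cartan matrix as `A = L + U` with `L`, `U` its unit lower and unit upper triangular
parts. Since `s i` only changes the `i`-th coordinate, expanding `c = s 1 ⋯ s n` gives
`U c = -L`, i.e. `U (c - 1) = -A`. Hence `ker (c - 1) = ker A = ℂ δ`: a kernel vector, shifted
by a multiple of `δ` to vanish at one coordinate, is isotropic for `K` on a proper face, hence 0.

With `D = diag d`, the vector `D δ` spans the left kernel of `A`, and `D L = (D U)ᵀ` shows
`D δ ⬝ U δ = 0`. By the Fredholm alternative `U δ = A g` for a real `g`, i.e. `(c - 1) (-g) = δ`.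
The functional `y ↦ D δ ⬝ U y` vanishes on the range of `c - 1`, while on `g` it equals
`-(D g ⬝ A g)`, which is nonzero once `g` is normalised to vanish at one coordinate. Thus
`-g ∉ range (c - 1)`, and the generalised `1`-eigenspace of `c` is a single Jordan block of size
two on `δ, -g`.
-/

namespace Module.End

open Submodule

variable {K M : Type*} [Field K] [AddCommGroup M] [Module K M] {φ : End K M} {v w : M}

theorem apply_apply_eq_zero_iff_mem_span_pair (hker : LinearMap.ker φ = K ∙ v) (hw : φ w = v)
    (x : M) : φ (φ x) = 0 ↔ x ∈ span K {v, w} := by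
  have hv : φ v = 0 := LinearMap.mem_ker.mp (hker ▸ mem_span_singleton_self v)
  constructor
  · intro hx
    obtain ⟨t, ht⟩ := mem_span_singleton.mp (hker ▸ LinearMap.mem_ker.mpr hx)
    have : x - t • w ∈ K ∙ v := by
      rw [← hker, LinearMap.mem_ker, map_sub, map_smul, hw, ht, sub_self]
    obtain ⟨s, hs⟩ := mem_span_singleton.mp this
    exact mem_span_pair.mpr ⟨s, t, by rw [hs, sub_add_cancel]⟩
  · intro hx
    obtain ⟨a, b, rfl⟩ := mem_span_pair.mp hx
    simp [hw, hv]

theorem maxGenEigenspace_zero_eq_span_pair (hker : LinearMap.ker φ = K ∙ v) (hw : φ w = v)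
    (hw' : w ∉ LinearMap.range φ) : φ.maxGenEigenspace 0 = span K {v, w} := by
  have hv : φ v = 0 := LinearMap.mem_ker.mp (hker ▸ mem_span_singleton_self v)
  have hstable (k : ℕ) : ∀ x : M, (φ ^ k) x = 0 → φ (φ x) = 0 := by
    induction k with
    | zero => intro x hx; simp_all
    | succ k ih =>
      intro x hx
      rw [pow_succ, mul_apply] at hx
      obtain ⟨a, b, hab⟩ :=
        mem_span_pair.mp ((apply_apply_eq_zero_iff_mem_span_pair hker hw _).mp (ih _ hx))
      obtain rfl : b = 0 := by
        by_contra hb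
        refine hw' ⟨b⁻¹ • (x - a • w), ?_⟩
        rw [map_smul, map_sub, map_smul, hw, ← hab, add_sub_cancel_left, inv_smul_smul₀ hb]
      rw [← hab, zero_smul, add_zero, map_smul, hv, smul_zero]
  ext x
  simp only [mem_maxGenEigenspace, zero_smul, sub_zero,
    ← apply_apply_eq_zero_iff_mem_span_pair hker hw]
  exact ⟨fun ⟨k, hk⟩ => hstable k x hk, fun hx => ⟨2, by rwa [pow_two]⟩⟩

theorem finrank_maxGenEigenspace_zero_eq_two (hker : LinearMap.ker φ = K ∙ v) (hw : φ w = v)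
    (hw' : w ∉ LinearMap.range φ) : Module.finrank K (φ.maxGenEigenspace 0) = 2 := by
  have hv : φ v = 0 := LinearMap.mem_ker.mp (hker ▸ mem_span_singleton_self v)
  have hv₀ : v ≠ 0 := by
    rintro rfl
    have : w ∈ LinearMap.ker φ := hw
    rw [hker, span_singleton_eq_bot.mpr rfl, mem_bot] at this
    exact hw' ⟨0, by rw [this, map_zero]⟩
  have hli : LinearIndependent K ![v, w] := by
    refine LinearIndependent.pair_iff.mpr fun a b hab => ?_
    obtain rfl : b = 0 := by simpa [hv, hw, hv₀] using congrArg φ hab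
    simpa [hv₀] using hab
  rw [maxGenEigenspace_zero_eq_span_pair hker hw hw', ← Matrix.range_cons_cons_empty v w ![],
    finrank_span_eq_card hli, Fintype.card_fin]

end Module.End

open Matrix in
theorem Matrix.mem_range_mulVecLin_of_forall_vecMul_eq_zero {K m n : Type*} [Field K] [Fintype m]
    [Fintype n] (M : Matrix m n K) {y : m → K} (h : ∀ x, x ᵥ* M = 0 → x ⬝ᵥ y = 0) :
    y ∈ LinearMap.range M.mulVecLin := by
  classical
  rw [← Subspace.forall_mem_dualAnnihilator_apply_eq_zero_iff]
  intro ψ hψ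
  have hψ_apply (z : m → K) : ψ z = (fun i => ψ (Pi.single i 1)) ⬝ᵥ z := by
    rw [LinearMap.pi_apply_eq_sum_univ ψ z, dotProduct]
    refine Finset.sum_congr rfl fun i _ => ?_
    rw [smul_eq_mul, mul_comm]
    congr 2
    ext j
    simp [Pi.single_apply, eq_comm]
  rw [hψ_apply]
  refine h _ (funext fun j => ?_)
  have := (Submodule.mem_dualAnnihilator ψ).mp hψ _ ⟨Pi.single j 1, rfl⟩
  rwa [mulVecLin_apply, mulVec_single_one, hψ_apply] at this

namespace AffineGCM

open Matrix

variable {n : ℕ} (C : AffineGCM n)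

section Matrices

variable (R : Type*) [Ring R]

def cartan : Matrix (Fin n) (Fin n) R := C.a.map (↑)

def unitUpper : Matrix (Fin n) (Fin n) R :=
  of fun i j => if i = j then 1 else if i < j then (C.a i j : R) else 0

def unitLower : Matrix (Fin n) (Fin n) R :=
  of fun i j => if i = j then 1 else if j < i then (C.a i j : R) else 0

def δ : Fin n → R := fun i => C.dz i

theorem unitLower_add_unitUpper : C.unitLower R + C.unitUpper R = C.cartan R := by
  ext i j
  rcases lt_trichotomy i j with h | rfl | h
  · simp [unitLower, unitUpper, cartan, h, h.ne, h.not_gt]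
  · simp [unitLower, unitUpper, cartan, C.diag, one_add_one_eq_two]
  · simp [unitLower, unitUpper, cartan, h, h.ne', h.not_gt]

variable {R} {S : Type*} [Ring S] (f : R →+* S)

theorem cartan_map : (C.cartan R).map f = C.cartan S := by
  ext; simp [cartan]

theorem unitUpper_map : (C.unitUpper R).map f = C.unitUpper S := by
  ext; simp only [unitUpper, map_apply, of_apply]; split_ifs <;> simp

theorem δ_map : f ∘ C.δ R = C.δ S := by
  ext; simp [δ]

end Matrices

theorem unitUpper_mulVec_injective (K : Type*) [Field K] :
    Function.Injective (C.unitUpper K).mulVec := by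
  refine mulVec_injective_iff_isUnit.mpr ((isUnit_iff_isUnit_det _).mpr ?_)
  rw [det_of_isUpperTriangular fun i j (hji : j < i) => by simp [unitUpper, hji.ne', hji.not_gt]]
  simp [unitUpper]

theorem K_coroot_apply (i : Fin n) (v : V n) : C.K (C.coroot i) v = (C.cartan ℂ *ᵥ v) i := by
  have hd : (C.d i : ℂ) ≠ 0 := by exact_mod_cast (C.d_pos i).ne'
  simp only [K, coroot, α, map_smul, LinearMap.smul_apply, LinearMap.mk₂_apply, Pi.single_apply,
    ite_mul, one_mul, zero_mul, Finset.sum_ite_irrel, Finset.sum_const_zero, Finset.sum_ite_eq',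
    Finset.mem_univ, if_true, smul_eq_mul, Finset.mul_sum, mulVec, dotProduct, cartan, map_apply]
  refine Finset.sum_congr rfl fun j _ => ?_
  field_simp

theorem s_apply (i : Fin n) (v : V n) : C.s i v = v - (C.cartan ℂ *ᵥ v) i • α i := by
  show C.sLin i v = _
  rw [sLin, reflMap_apply, K_coroot_apply]

theorem prod_drop_ofFn_s {k : ℕ} (hk : k < n) :
    ((List.ofFn C.s).drop k).prod = C.s ⟨k, hk⟩ * ((List.ofFn C.s).drop (k + 1)).prod := by
  rw [List.drop_eq_getElem_cons (by simpa using hk), List.prod_cons, List.getElem_ofFn]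

theorem unitUpper_mulVec_prod_drop (v : V n) {k : ℕ} (hk : k ≤ n) :
    (∀ i : Fin n, i.val < k → ((List.ofFn C.s).drop k).prod v i = v i) ∧
    ∀ j : Fin n, k ≤ j.val →
      (C.unitUpper ℂ *ᵥ ((List.ofFn C.s).drop k).prod v) j = -(C.unitLower ℂ *ᵥ v) j := by
  induction hk using Nat.decreasingInduction with
  | self =>
    rw [List.drop_eq_nil_of_le (by simp)]
    exact ⟨fun _ _ => rfl, fun j hj => absurd j.isLt hj.not_gt⟩
  | of_succ k hk ih =>
    obtain ⟨ih_fix, ih_upper⟩ := ih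
    set y := ((List.ofFn C.s).drop (k + 1)).prod v
    set κ : Fin n := ⟨k, hk⟩
    have hy : ((List.ofFn C.s).drop k).prod v = y - (C.cartan ℂ *ᵥ y) κ • α κ := by
      rw [prod_drop_ofFn_s C hk, LinearEquiv.mul_apply, s_apply]
    refine ⟨fun i hi => ?_, fun j hj => ?_⟩
    · have : i ≠ κ := Fin.ne_of_val_ne hi.ne
      simp [hy, α, this, ih_fix i (by omega)]
    rw [hy, mulVec_sub, mulVec_smul, α, mulVec_single_one, Pi.sub_apply, Pi.smul_apply, col_apply]
    rcases hj.eq_or_lt with hjk | hjk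
    · obtain rfl : j = κ := Fin.ext hjk.symm
      have hL : (C.unitLower ℂ *ᵥ y) κ = (C.unitLower ℂ *ᵥ v) κ := by
        simp only [mulVec, dotProduct]
        refine Finset.sum_congr rfl fun i _ => ?_
        by_cases hi : i.val < k + 1
        · rw [ih_fix i hi]
        · have hlt : ¬ i < κ := fun h => hi (Nat.lt_succ_of_lt h)
          have hne : i ≠ κ := by rintro rfl; exact hi (Nat.lt_succ_self k)
          simp [unitLower, hlt, hne.symm]
      rw [← hL, ← C.unitLower_add_unitUpper, add_mulVec]
      simp [unitUpper]
    · have hlt : ¬ j < κ := fun h => lt_asymm (h : j.val < k) hjk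
      have hne : j ≠ κ := by rintro rfl; exact lt_irrefl k hjk
      rw [show C.unitUpper ℂ j κ = 0 by simp [unitUpper, hlt, hne], smul_zero, sub_zero,
        ih_upper j hjk]

theorem unitUpper_mulVec_cox (v : V n) : C.unitUpper ℂ *ᵥ C.cox v = -(C.unitLower ℂ *ᵥ v) :=
  funext fun j => (C.unitUpper_mulVec_prod_drop v (Nat.zero_le n)).2 j (Nat.zero_le _)

theorem unitUpper_mulVec_cox_sub_self (v : V n) :
    C.unitUpper ℂ *ᵥ (C.cox v - v) = -(C.cartan ℂ *ᵥ v) := by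
  rw [mulVec_sub, unitUpper_mulVec_cox, ← C.unitLower_add_unitUpper, add_mulVec]
  abel

theorem n_pos (C : AffineGCM n) : 0 < n := by
  obtain ⟨g, hg, -⟩ := C.not_posDef
  exact Nat.pos_of_ne_zero fun h => hg (funext fun i => (h ▸ i).elim0)

/-- The coordinates of `δ` in the basis of simple coroots. -/
def δCoroot : Fin n → ℝ := C.d * C.δ ℝ

theorem δCoroot_vecMul_cartan : C.δCoroot ᵥ* C.cartan ℝ = 0 := by
  ext j
  simp only [δCoroot, δ, vecMul, dotProduct, cartan, map_apply, Pi.mul_apply, Pi.zero_apply]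
  rw [← C.dz_ker j]
  exact Finset.sum_congr rfl fun i _ => by ring

theorem cartan_mulVec_δ : C.cartan ℝ *ᵥ C.δ ℝ = 0 := by
  ext i
  have hd := (C.d_pos i).ne'
  have := congrFun C.δCoroot_vecMul_cartan i
  simp only [δCoroot, δ, vecMul, dotProduct, cartan, map_apply, Pi.mul_apply, Pi.zero_apply] at this
  simp only [mulVec, dotProduct, cartan, δ, map_apply, Pi.zero_apply]
  refine (mul_eq_zero.mp ?_).resolve_left hd
  rw [← this, Finset.mul_sum]
  refine Finset.sum_congr rfl fun j _ => ?_
  linear_combination (C.dz j : ℝ) * C.symmetrizable i j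

theorem dotProduct_cartan_mulVec (g : Fin n → ℝ) :
    (C.d * g) ⬝ᵥ (C.cartan ℝ *ᵥ g) = ∑ i, ∑ j, g i * g j * (C.d i * C.a i j) := by
  simp only [dotProduct, mulVec, cartan, map_apply, Pi.mul_apply, Finset.mul_sum]
  exact Finset.sum_congr rfl fun i _ => Finset.sum_congr rfl fun j _ => by ring

theorem dotProduct_cartan_mulVec_pos {g : Fin n → ℝ} {i₀ : Fin n} (hg₀ : g i₀ = 0) (hg : g ≠ 0) :
    0 < (C.d * g) ⬝ᵥ (C.cartan ℝ *ᵥ g) := by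
  rw [dotProduct_cartan_mulVec]
  refine C.proper_posDef _ (Finset.erase_ssubset (Finset.mem_univ i₀)).ne g (fun i hi => ?_) hg
  rwa [show i = i₀ by simpa using hi]

theorem exists_sub_smul_δ_apply_eq_zero (g : Fin n → ℝ) (i₀ : Fin n) :
    ∃ t : ℝ, C.cartan ℝ *ᵥ (g - t • C.δ ℝ) = C.cartan ℝ *ᵥ g ∧ (g - t • C.δ ℝ) i₀ = 0 := by
  have hδ₀ : C.δ ℝ i₀ ≠ 0 := by simpa [δ] using (C.dz_pos i₀).ne'
  exact ⟨g i₀ / C.δ ℝ i₀, by simp [mulVec_sub, mulVec_smul, cartan_mulVec_δ], by simp [hδ₀]⟩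

theorem eq_smul_δ_of_cartan_mulVec_eq_zero {g : Fin n → ℝ} (hg : C.cartan ℝ *ᵥ g = 0) :
    ∃ t : ℝ, g = t • C.δ ℝ := by
  obtain ⟨t, hA, hg₀⟩ := C.exists_sub_smul_δ_apply_eq_zero g ⟨0, C.n_pos⟩
  refine ⟨t, by_contra fun hne => ?_⟩
  have := C.dotProduct_cartan_mulVec_pos hg₀ (sub_ne_zero.mpr hne)
  rw [hA, hg, dotProduct_zero] at this
  exact lt_irrefl 0 this

theorem eq_smul_δCoroot_of_vecMul_cartan_eq_zero {x : Fin n → ℝ} (hx : x ᵥ* C.cartan ℝ = 0) :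
    ∃ t : ℝ, x = t • C.δCoroot := by
  have hA : C.cartan ℝ *ᵥ (x / C.d) = 0 := by
    ext j
    have hd := (C.d_pos j).ne'
    have := congrFun hx j
    simp only [vecMul, mulVec, dotProduct, cartan, map_apply, Pi.div_apply, Pi.zero_apply] at this ⊢
    rw [← zero_div (C.d j), ← this, Finset.sum_div]
    refine Finset.sum_congr rfl fun k _ => ?_
    have := (C.d_pos k).ne'
    field_simp
    linear_combination (x k) * C.symmetrizable j k
  obtain ⟨t, ht⟩ := C.eq_smul_δ_of_cartan_mulVec_eq_zero hA
  refine ⟨t, funext fun i => ?_⟩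
  have := congrFun ht i
  have hd := (C.d_pos i).ne'
  simp only [Pi.div_apply, Pi.smul_apply, smul_eq_mul] at this
  simp only [δCoroot, Pi.smul_apply, Pi.mul_apply, smul_eq_mul]
  field_simp at this
  linear_combination this

theorem d_mul_unitLower (i j : Fin n) :
    C.d i * C.unitLower ℝ i j = C.d j * C.unitUpper ℝ j i := by
  rcases lt_trichotomy i j with h | rfl | h
  · simp [unitLower, unitUpper, h.ne, h.ne', h.not_gt]
  · simp [unitLower, unitUpper]
  · simp [unitLower, unitUpper, h, h.ne, h.ne', C.symmetrizable]

theorem dotProduct_unitLower_mulVec (x y : Fin n → ℝ) :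
    (C.d * x) ⬝ᵥ (C.unitLower ℝ *ᵥ y) = (C.d * y) ⬝ᵥ (C.unitUpper ℝ *ᵥ x) := by
  simp only [dotProduct, mulVec, Pi.mul_apply, Finset.mul_sum]
  rw [Finset.sum_comm]
  refine Finset.sum_congr rfl fun j _ => Finset.sum_congr rfl fun i _ => ?_
  linear_combination x i * y j * C.d_mul_unitLower i j

theorem exists_cartan_mulVec_eq_unitUpper_mulVec_δ :
    ∃ g : Fin n → ℝ, C.cartan ℝ *ᵥ g = C.unitUpper ℝ *ᵥ C.δ ℝ ∧
      C.δCoroot ⬝ᵥ (C.unitUpper ℝ *ᵥ g) ≠ 0 := by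
  have hδCoroot_unitUpper (g : Fin n → ℝ) :
      C.δCoroot ⬝ᵥ (C.unitUpper ℝ *ᵥ g) = -((C.d * g) ⬝ᵥ (C.unitUpper ℝ *ᵥ C.δ ℝ)) := by
    have h₀ : C.δCoroot ⬝ᵥ (C.cartan ℝ *ᵥ g) = 0 := by
      rw [dotProduct_mulVec, δCoroot_vecMul_cartan, zero_dotProduct]
    rw [← C.unitLower_add_unitUpper, add_mulVec, dotProduct_add, δCoroot,
      dotProduct_unitLower_mulVec] at h₀
    rw [δCoroot]
    linear_combination h₀
  obtain ⟨g₀, hg₀⟩ : C.unitUpper ℝ *ᵥ C.δ ℝ ∈ LinearMap.range (C.cartan ℝ).mulVecLin := by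
    refine (C.cartan ℝ).mem_range_mulVecLin_of_forall_vecMul_eq_zero fun x hx => ?_
    obtain ⟨t, rfl⟩ := C.eq_smul_δCoroot_of_vecMul_cartan_eq_zero hx
    have := hδCoroot_unitUpper (C.δ ℝ)
    rw [← δCoroot] at this
    rw [smul_dotProduct, show C.δCoroot ⬝ᵥ _ = 0 by linarith, smul_zero]
  set i₀ : Fin n := ⟨0, C.n_pos⟩
  obtain ⟨t, hA, hg_i₀⟩ := C.exists_sub_smul_δ_apply_eq_zero g₀ i₀
  set g := g₀ - t • C.δ ℝ
  rw [mulVecLin_apply] at hg₀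
  rw [hg₀] at hA
  have hg : g ≠ 0 := by
    intro h
    rw [h, mulVec_zero, eq_comm, ← mulVec_zero (C.unitUpper ℝ)] at hA
    have := congrFun (C.unitUpper_mulVec_injective ℝ hA) i₀
    simp [δ, (C.dz_pos i₀).ne'] at this
  refine ⟨g, hA, ?_⟩
  rw [hδCoroot_unitUpper, ← hA]
  exact neg_ne_zero.mpr (C.dotProduct_cartan_mulVec_pos hg_i₀ hg).ne'

theorem cartan_mulVec_δv : C.cartan ℂ *ᵥ C.δv = 0 := by
  ext i
  change (C.cartan ℂ *ᵥ C.δ ℂ) i = 0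
  rw [← C.δ_map Complex.ofRealHom, ← C.cartan_map Complex.ofRealHom, ← RingHom.map_mulVec,
    cartan_mulVec_δ, Pi.zero_apply, map_zero]

theorem δv_ne_zero : C.δv ≠ 0 := fun h => by
  simpa [δv, (C.dz_pos _).ne'] using congrFun h ⟨0, C.n_pos⟩

theorem mem_span_δv_of_cartan_mulVec_eq_zero {x : V n} (hx : C.cartan ℂ *ᵥ x = 0) :
    x ∈ ℂ ∙ C.δv := by
  have hre : C.cartan ℝ *ᵥ (fun i => (x i).re) = 0 := by
    ext i
    simpa [mulVec, dotProduct, cartan, Complex.re_sum] using congrArg Complex.re (congrFun hx i)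
  have him : C.cartan ℝ *ᵥ (fun i => (x i).im) = 0 := by
    ext i
    simpa [mulVec, dotProduct, cartan, Complex.im_sum] using congrArg Complex.im (congrFun hx i)
  obtain ⟨t₁, ht₁⟩ := C.eq_smul_δ_of_cartan_mulVec_eq_zero hre
  obtain ⟨t₂, ht₂⟩ := C.eq_smul_δ_of_cartan_mulVec_eq_zero him
  refine Submodule.mem_span_singleton.mpr ⟨t₁ + t₂ * Complex.I, funext fun i => ?_⟩
  have h₁ := congrFun ht₁ i
  have h₂ := congrFun ht₂ i
  simp only [Pi.smul_apply, smul_eq_mul, δ] at h₁ h₂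
  apply Complex.ext <;> simp [δv, h₁, h₂]

theorem ker_cox_sub_one :
    LinearMap.ker ((C.cox : Module.End ℂ (V n)) - 1) = ℂ ∙ C.δv := by
  ext x
  have hA : ((C.cox : Module.End ℂ (V n)) - 1) x = 0 ↔ C.cartan ℂ *ᵥ x = 0 := by
    rw [← (C.unitUpper_mulVec_injective ℂ).eq_iff, mulVec_zero]
    simp [unitUpper_mulVec_cox_sub_self]
  rw [LinearMap.mem_ker, hA]
  refine ⟨C.mem_span_δv_of_cartan_mulVec_eq_zero, fun hx => ?_⟩
  obtain ⟨t, rfl⟩ := Submodule.mem_span_singleton.mp hx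
  rw [mulVec_smul, cartan_mulVec_δv, smul_zero]

theorem exists_cox_sub_one_apply_eq_δv :
    ∃ w : V n, ((C.cox : Module.End ℂ (V n)) - 1) w = C.δv ∧
      w ∉ LinearMap.range ((C.cox : Module.End ℂ (V n)) - 1) := by
  obtain ⟨g, hg, hg_range⟩ := C.exists_cartan_mulVec_eq_unitUpper_mulVec_δ
  set f := Complex.ofRealHom
  have hU (y : Fin n → ℝ) : C.unitUpper ℂ *ᵥ (f ∘ y) = f ∘ (C.unitUpper ℝ *ᵥ y) := by
    ext i; rw [← C.unitUpper_map f]; exact (RingHom.map_mulVec f _ y i).symm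
  have hA (y : Fin n → ℝ) : C.cartan ℂ *ᵥ (f ∘ y) = f ∘ (C.cartan ℝ *ᵥ y) := by
    ext i; rw [← C.cartan_map f]; exact (RingHom.map_mulVec f _ y i).symm
  refine ⟨-(f ∘ g), C.unitUpper_mulVec_injective ℂ ?_, ?_⟩
  · simp only [LinearMap.sub_apply, Module.End.one_apply, LinearEquiv.coe_coe,
      unitUpper_mulVec_cox_sub_self, mulVec_neg, neg_neg, hA, hg, ← hU, δ_map]
    rfl
  rintro ⟨v, hv⟩
  have hδCoroot : (f ∘ C.δCoroot) ᵥ* C.cartan ℂ = 0 := by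
    ext j; rw [← C.cartan_map f, ← RingHom.map_vecMul, δCoroot_vecMul_cartan]; simp
  apply hg_range
  have := congrArg (fun y => (f ∘ C.δCoroot) ⬝ᵥ (C.unitUpper ℂ *ᵥ y)) hv
  simp only [LinearMap.sub_apply, Module.End.one_apply, LinearEquiv.coe_coe,
    unitUpper_mulVec_cox_sub_self, dotProduct_neg, dotProduct_mulVec, hδCoroot, zero_dotProduct,
    mulVec_neg, hU, ← RingHom.map_dotProduct] at this
  simpa [dotProduct_mulVec] using this

/-- Proposition 3.1(1): `c` has eigenvalue `1` with algebraic multiplicity `2` and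
geometric multiplicity `1`, and `δ` is a `1`-eigenvector. -/
theorem eigenvalue_one {n : ℕ} (C : AffineGCM n) :
    Polynomial.rootMultiplicity 1 (LinearMap.charpoly (C.cox : V n →ₗ[ℂ] V n)) = 2 ∧
    Module.finrank ℂ (Module.End.eigenspace (C.cox : Module.End ℂ (V n)) 1) = 1 ∧
    C.cox C.δv = C.δv ∧ C.δv ≠ 0 := by
  have hker := C.ker_cox_sub_one
  obtain ⟨w, hw, hw_range⟩ := C.exists_cox_sub_one_apply_eq_δv
  refine ⟨?_, ?_, ?_, C.δv_ne_zero⟩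
  · rw [← LinearMap.finrank_maxGenEigenspace_eq,
      Module.End.maxGenEigenspace_eq_maxGenEigenspace_zero, one_smul]
    exact Module.End.finrank_maxGenEigenspace_zero_eq_two hker hw hw_range
  · rw [Module.End.eigenspace_def, one_smul, hker, finrank_span_singleton C.δv_ne_zero]
  · have : C.δv ∈ LinearMap.ker ((C.cox : Module.End ℂ (V n)) - 1) :=
      hker ▸ Submodule.mem_span_singleton_self _
    simpa [sub_eq_zero] using this

end AffineGCM
end
end

section
/- Let c = c_◁ s_aff c_▷ be a Coxeter element in the Weyl group of an affine root system, and let λ be a complex number with λ ≠ 1. A vector v ∈ V_fin is a λ-eigenvector of c_◁ t_θ c_▷ if and only if v + (K(θ^∨, c_▷ v)/(λ−1))·δ is a λ-eigenvector of c. -/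
/-!
`δ` spans the radical of `K`, so every simple reflection fixes it, and since
`θ = δ - [δ : α aff] • α aff`, the reflection `t_θ` differs from `s_aff` by a multiple of `δ`:
`t_θ y = s_aff y - K (θ^∨, y) • δ`. Hence `c_◁ t_θ c_▷ = c - φ(·) • δ` with
`φ = K (θ^∨, c_▷ ·)`, and for `w = v + (φ v / (λ - 1)) • δ` one gets
`c w - λ w = c_◁ t_θ c_▷ v - λ v`. Finally `v ∈ V_fin` has no `α aff`-coordinate while `δ`
does, so `w ≠ 0` exactly when `v ≠ 0`.
-/

open scoped BigOperators

noncomputable section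

section EigenvectorShift

variable {k M : Type*} [Field k] [AddCommGroup M] [Module k M]

theorem add_smul_eq_zero_iff_of_apply_eq_zero (π : M →ₗ[k] k) {δ v : M} (hδ : π δ ≠ 0)
    (hv : π v = 0) (c : k) : v + c • δ = 0 ↔ v = 0 ∧ c = 0 := by
  refine ⟨fun h => ?_, fun ⟨hv0, hc0⟩ => by rw [hv0, hc0, zero_smul, add_zero]⟩
  have hc : c = 0 := by
    simpa [hv, hδ] using congrArg π h
  exact ⟨by simpa [hc] using h, hc⟩

variable (f g : M →ₗ[k] M) (φ : M →ₗ[k] k) {δ : M}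

theorem apply_add_smul_sub_smul_eq (hgδ : g δ = δ) (hfg : ∀ x, f x = g x - φ x • δ)
    {lam : k} (hlam : lam ≠ 1) (v : M) :
    g (v + (φ v / (lam - 1)) • δ) - lam • (v + (φ v / (lam - 1)) • δ) = f v - lam • v := by
  have ht : φ v / (lam - 1) * (lam - 1) = φ v := div_mul_cancel₀ _ (sub_ne_zero.2 hlam)
  rw [map_add, map_smul, hgδ, hfg]
  linear_combination (norm := module) -ht • δ

theorem eigenvector_iff_of_apply_eq_sub (π : M →ₗ[k] k) (hπδ : π δ ≠ 0)
    (hgδ : g δ = δ) (hfg : ∀ x, f x = g x - φ x • δ) {lam : k} (hlam : lam ≠ 1)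
    {v : M} (hv : π v = 0) :
    (v ≠ 0 ∧ f v = lam • v) ↔
      (v + (φ v / (lam - 1)) • δ ≠ 0 ∧
        g (v + (φ v / (lam - 1)) • δ) = lam • (v + (φ v / (lam - 1)) • δ)) := by
  rw [← sub_eq_zero (a := f v), ← sub_eq_zero (a := g _),
    apply_add_smul_sub_smul_eq f g φ hgδ hfg hlam]
  refine and_congr_left fun _ => not_congr ?_
  rw [add_smul_eq_zero_iff_of_apply_eq_zero π hπδ hv]
  exact (and_iff_left_of_imp fun hv0 => by simp [hv0]).symm

end EigenvectorShift

namespace AffineGCM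

variable {n : ℕ} (C : AffineGCM n)

theorem K_symm (x y : V n) : C.K x y = C.K y x := by
  simp only [K, LinearMap.mk₂_apply]
  rw [Finset.sum_comm]
  refine Finset.sum_congr rfl fun j _ => Finset.sum_congr rfl fun i _ => ?_
  have h : (C.d i : ℂ) * (C.a i j : ℂ) = (C.d j : ℂ) * (C.a j i : ℂ) := by
    exact_mod_cast congrArg Complex.ofReal (C.symmetrizable i j)
  rw [h]; ring

theorem K_δv_left (x : V n) : C.K C.δv x = 0 := by
  simp only [K, LinearMap.mk₂_apply, δv]
  rw [Finset.sum_comm]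
  refine Finset.sum_eq_zero fun j _ => ?_
  have h : ∑ i, (C.dz i : ℂ) * ((C.d i : ℂ) * (C.a i j : ℂ)) = 0 := by
    exact_mod_cast congrArg Complex.ofReal (C.dz_ker j)
  simp_rw [mul_right_comm _ (x j), ← Finset.sum_mul, h, zero_mul]

theorem K_δv_right (x : V n) : C.K x C.δv = 0 := by
  rw [K_symm, K_δv_left]

theorem sLin_δv (i : Fin n) : C.sLin i C.δv = C.δv := by
  simp [sLin, reflMap_apply, K_δv_right]

theorem list_prod_sLin_apply_δv {l : List (V n →ₗ[ℂ] V n)} (hl : l ⊆ List.ofFn C.sLin) :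
    l.prod C.δv = C.δv := by
  refine (MulAction.stabilizerSubmonoid (V n →ₗ[ℂ] V n) C.δv).list_prod_mem fun f hf => ?_
  obtain ⟨i, rfl⟩ := List.mem_ofFn.mp (hl hf)
  exact C.sLin_δv i

theorem coe_cox : (C.cox : V n →ₗ[ℂ] V n) = (List.ofFn C.sLin).prod := by
  rw [cox, ← LinearEquiv.automorphismGroup.toLinearMapMonoidHom_apply, map_list_prod,
    List.map_ofFn]
  rfl

theorem coe_cox_eq_cleft_mul_sLin_mul_cright (aff : Fin n) :
    (C.cox : V n →ₗ[ℂ] V n) = C.cleft aff * C.sLin aff * C.cright aff := by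
  have hsplit : List.ofFn C.sLin =
      (List.ofFn C.sLin).take aff ++ C.sLin aff :: (List.ofFn C.sLin).drop (aff + 1) := by
    conv_lhs => rw [← List.take_append_drop (aff : ℕ) (List.ofFn C.sLin)]
    rw [List.drop_eq_getElem_cons (by simp), List.getElem_ofFn]
  rw [coe_cox, hsplit, List.prod_append, List.prod_cons, cleft, cright, mul_assoc]

theorem cox_δv : C.cox C.δv = C.δv := by
  rw [← LinearEquiv.coe_coe, coe_cox]
  exact C.list_prod_sLin_apply_δv (List.Subset.refl _)

theorem cleft_δv (aff : Fin n) : C.cleft aff C.δv = C.δv :=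
  C.list_prod_sLin_apply_δv (List.take_subset _ _)

def θcoroot (aff : Fin n) : V n := (2 / C.K (C.θv aff) (C.θv aff)) • C.θv aff

theorem K_θv_left (aff : Fin n) (y : V n) :
    C.K (C.θv aff) y = -(C.dz aff : ℂ) * C.K (α aff) y := by
  rw [θv, map_sub, map_smul, LinearMap.sub_apply, LinearMap.smul_apply, K_δv_left, smul_eq_mul]
  ring

theorem K_θv_θv (aff : Fin n) :
    C.K (C.θv aff) (C.θv aff) = 2 * (C.dz aff : ℂ) ^ 2 * (C.d aff : ℂ) := by
  rw [K_θv_left, θv, map_sub, map_smul, K_δv_right, K_α_α, smul_eq_mul, C.diag]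
  push_cast
  ring

theorem K_θcoroot_mul_dz (aff : Fin n) (y : V n) :
    C.K (C.θcoroot aff) y * C.dz aff = -C.K (C.coroot aff) y := by
  have hm : (C.dz aff : ℂ) ≠ 0 := by exact_mod_cast (C.dz_pos aff).ne'
  have hd : (C.d aff : ℂ) ≠ 0 := by exact_mod_cast (C.d_pos aff).ne'
  rw [θcoroot, coroot, map_smul, map_smul, LinearMap.smul_apply, LinearMap.smul_apply,
    smul_eq_mul, smul_eq_mul, K_θv_θv, K_θv_left]
  field_simp

theorem tRefl_θv_apply (aff : Fin n) (y : V n) :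
    C.tRefl (C.θv aff) y = C.sLin aff y - C.K (C.θcoroot aff) y • C.δv := by
  rw [tRefl, reflMap_apply, sLin, reflMap_apply, ← θcoroot, θv]
  linear_combination (norm := module) (C.K_θcoroot_mul_dz aff y) • α aff

theorem cleft_mul_tRefl_θv_mul_cright_apply (aff : Fin n) (x : V n) :
    (C.cleft aff * C.tRefl (C.θv aff) * C.cright aff) x =
      C.cox x - C.K (C.θcoroot aff) (C.cright aff x) • C.δv := by
  rw [← LinearEquiv.coe_coe, coe_cox_eq_cleft_mul_sLin_mul_cright C aff]
  simp only [Module.End.mul_apply, tRefl_θv_apply, map_sub, map_smul, cleft_δv]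

theorem apply_eq_zero_of_mem_Vfin {aff : Fin n} {v : V n} (hv : v ∈ Vfin aff) : v aff = 0 := by
  have hle : Vfin aff ≤ LinearMap.ker (LinearMap.proj aff : V n →ₗ[ℂ] ℂ) := by
    rw [Vfin, Submodule.span_le]
    rintro _ ⟨i, hi, rfl⟩
    exact Pi.single_eq_of_ne (Ne.symm hi) 1
  exact hle hv

theorem eigenvector_correspondence_general {n : ℕ} (C : AffineGCM n) (aff : Fin n)
    (lam : ℂ) (hlam : lam ≠ 1) (v : V n) (hv : v ∈ Vfin aff) (w : V n)
    (hw : w = v + (C.K ((2 / C.K (C.θv aff) (C.θv aff)) • C.θv aff) (C.cright aff v) / (lam - 1)) • C.δv) :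
    (v ≠ 0 ∧ (C.cleft aff * C.tRefl (C.θv aff) * C.cright aff) v = lam • v) ↔
      (w ≠ 0 ∧ C.cox w = lam • w) := by
  subst hw
  have hδ : C.δv aff ≠ 0 := by simpa [δv] using (C.dz_pos aff).ne'
  exact eigenvector_iff_of_apply_eq_sub _ C.cox (C.K (C.θcoroot aff) ∘ₗ C.cright aff)
    (LinearMap.proj aff) hδ C.cox_δv (C.cleft_mul_tRefl_θv_mul_cright_apply aff) hlam
    (apply_eq_zero_of_mem_Vfin hv)

/-- Proposition 3.1(5): for `λ ≠ 1`, a vector `v ∈ V_fin` is a `λ`-eigenvector of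
`c_◁ t_θ c_▷` iff `v + (K (θ^∨) (c_▷ v) / (λ - 1)) • δ` is a `λ`-eigenvector of `c`. -/
theorem eigenvector_correspondence {n : ℕ} (C : AffineGCM n) (aff : Fin n)
    (haff : ((Subgroup.closure (C.s '' {j : Fin n | j ≠ aff}) : Subgroup (V n ≃ₗ[ℂ] V n)) : Set (V n ≃ₗ[ℂ] V n)).Finite)
    (lam : ℂ) (hlam : lam ≠ 1) (v : V n) (hv : v ∈ Vfin aff) (w : V n)
    (hw : w = v + (C.K ((2 / C.K (C.θv aff) (C.θv aff)) • C.θv aff) (C.cright aff v) / (lam - 1)) • C.δv) :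
    (v ≠ 0 ∧ (C.cleft aff * C.tRefl (C.θv aff) * C.cright aff) v = lam • v) ↔
      (w ≠ 0 ∧ C.cox w = lam • w) :=
  eigenvector_correspondence_general C aff lam hlam v hv w hw

end AffineGCM
end
end
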